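/- There are isomorphisms of (ℂG, Z(A))-bimodules C(G,H,A)·ι(e_G) ≅ Fun_H(G, A·e_H) ≅ ℂG ⊗_{ℂH} (A·e_H), where ℂG acts on the left ideal C(G,H,A)·ι(e_G) by left multiplication via ι and on Fun_H(G, A·e_H) via (ι(g)f)(w) = f(wg), Z(A) acts by (pointwise) right multiplication, and A·e_H is regarded as a left ℂH-module via h·a = φ(h)a and a right Z(A)-module by right multiplication. -/

import Mathlib

/-!
`ι(e_G)` maps `f ∈ Fun_H(G,A)` to `δ · m(f)`, where `m(f) = |G|⁻¹ ∑_g f(g)`: the mean `m(f)` is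
fixed by every `φ(h)`, hence by `e_H`. So `M · ι(e_G)` is determined by its value at `δ`, which
lies in `Fun_H(G, A·e_H)` because `δ = δ · e_H`; every such `f` is attained, as
`(|G|⁻¹ η(f)) ι(e_G) δ = f`.

The map `a ⊗ n ↦ (w ↦ ∑_{h ∈ H} a(w⁻¹h) φ(h) n)` respects the relations `ah ⊗ n = a ⊗ φ(h) n`,
and `f ↦ |H|⁻¹ ∑_g g⁻¹ ⊗ f(g)` is inverse to it: one composite is the identity by
`f(hw) = φ(h) f(w)`, the other modulo the relations `g ⊗ φ(h) n = gh ⊗ n`.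
-/

open scoped BigOperators

section Setup
variable {G : Type} [Group G] [Fintype G] {H : Subgroup G} [Fintype H]
variable {A : Type} [Ring A] [Algebra ℂ A]

/-- `Fun_H(G,A)`: the `H`-equivariant `A`-valued functions on `G`,
as a right `A`-module (i.e. a module over `Aᵐᵒᵖ`). -/
def FunH (φ : H →* Aˣ) : Submodule Aᵐᵒᵖ (G → A) where
  carrier := {f | ∀ (h : H) (g : G), f (↑h * g) = (φ h : A) * f g}
  add_mem' := by
    intro f g hf hg h x
    simp only [Pi.add_apply, hf h x, hg h x, mul_add]
  zero_mem' := by intro h x; simp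
  smul_mem' := by
    intro a f hf h x
    simp only [Pi.smul_apply, MulOpposite.smul_eq_mul_unop, hf h x, mul_assoc]

variable (φ : H →* Aˣ)

/-- `ι(w)`, the endomorphism `f ↦ (g ↦ f (g * w))` of the right `A`-module `Fun_H(G,A)`. -/
def iota (w : G) : Module.End Aᵐᵒᵖ (FunH (G := G) φ) where
  toFun f := ⟨fun g => (f : G → A) (g * w), fun h x => by
    simpa only [mul_assoc] using f.2 h (x * w)⟩
  map_add' f₁ f₂ := rfl
  map_smul' a f := rfl

/-- `ι(e_G)` where `e_G = |G|⁻¹ ∑_{g ∈ G} g` is the symmetrizing idempotent of `ℂG`. -/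
noncomputable def iotaEG : Module.End Aᵐᵒᵖ (FunH (G := G) φ) :=
  (Fintype.card G : ℂ)⁻¹ • ∑ g : G, iota φ g

/-- The idempotent `e_H = |H|⁻¹ ∑_{h ∈ H} φ(h) ∈ A`. -/
noncomputable def eH : A := (Fintype.card H : ℂ)⁻¹ • ∑ h : H, (φ h : A)

lemma phi_mul_eH (h : H) : (φ h : A) * eH φ = eH φ := by
  unfold eH
  rw [mul_smul_comm, Finset.mul_sum]
  congr 1
  exact Fintype.sum_equiv (Equiv.mulLeft h) _ _ (fun x => by
    simp [Equiv.mulLeft, ← Units.val_mul])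

/-- The element `δ ∈ Fun_H(G,A)`, the constant function with value `e_H`. -/
noncomputable def delta : FunH (G := G) φ := ⟨fun _ => eH φ, fun h g => (phi_mul_eH φ h).symm⟩

/-- `η(f)`: the right `A`-module endomorphism `h ↦ (w ↦ f(w) ⬝ ∑_{g ∈ G} h(g))`. -/
def eta (f : FunH (G := G) φ) : Module.End Aᵐᵒᵖ (FunH (G := G) φ) where
  toFun h := ⟨fun w => (f : G → A) w * ∑ g : G, (h : G → A) g, fun hh x => by
    simp only []
    rw [f.2 hh x, mul_assoc]⟩
  map_add' h₁ h₂ := by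
    ext w
    simp [Finset.sum_add_distrib, mul_add]
  map_smul' a h := by
    ext w
    simp [MulOpposite.smul_eq_mul_unop, ← Finset.sum_mul, mul_assoc]

/-- Right multiplication by a central element `z`, as an endomorphism of `Fun_H(G,A)`. -/
def rmul (z : A) (hz : z ∈ Set.center A) : Module.End Aᵐᵒᵖ (FunH (G := G) φ) where
  toFun f := ⟨fun w => (f : G → A) w * z, fun h x => by simp only []; rw [f.2 h x, mul_assoc]⟩
  map_add' f₁ f₂ := by ext w; simp [add_mul]
  map_smul' a f := by
    ext w
    simp only [Submodule.coe_smul, Pi.smul_apply, MulOpposite.smul_eq_mul_unop,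
      mul_assoc]
    rw [hz.comm]; rfl
  
end Setup

section Induction
open TensorProduct

variable {G : Type} [Group G] [Fintype G] {H : Subgroup G} [Fintype H]
variable {A : Type} [Ring A] [Algebra ℂ A]
variable (φ : H →* Aˣ)

/-- The right ideal `A·e_H`, as a `ℂ`-submodule of `A`. -/
noncomputable def AeH : Submodule ℂ A where
  carrier := {x | ∃ a : A, x = a * eH φ}
  add_mem' := by rintro x y ⟨a, rfl⟩ ⟨b, rfl⟩; exact ⟨a + b, (add_mul a b _).symm⟩
  zero_mem' := ⟨0, (zero_mul _).symm⟩
  smul_mem' := by rintro c x ⟨a, rfl⟩; exact ⟨c • a, (smul_mul_assoc c a _).symm⟩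

/-- The left `ℂH`-module structure on `A·e_H`: `h · a = φ(h)a`. -/
noncomputable def hAct (h : H) (n : AeH (G := G) φ) : AeH (G := G) φ :=
  ⟨(φ h : A) * n.1, by
    obtain ⟨a, ha⟩ := n.2
    exact ⟨(φ h : A) * a, by rw [ha, mul_assoc]⟩⟩

/-- The right `Z(A)`-module structure on `A·e_H`: right multiplication by a central `z`. -/
noncomputable def zAct (z : A) (hz : z ∈ Set.center A) (n : AeH (G := G) φ) :
    AeH (G := G) φ :=
  ⟨n.1 * z, by
    obtain ⟨a, ha⟩ := n.2
    exact ⟨a * z, by rw [ha, mul_assoc, ← hz.comm, ← mul_assoc]⟩⟩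

/-- The subspace of relations defining the tensor product `ℂG ⊗_{ℂH} (A·e_H)`
as a quotient of `ℂG ⊗_ℂ (A·e_H)`. -/
noncomputable def indRel : Submodule ℂ (MonoidAlgebra ℂ G ⊗[ℂ] AeH (G := G) φ) :=
  Submodule.span ℂ {x | ∃ (a : MonoidAlgebra ℂ G) (h : H) (n : AeH (G := G) φ),
    x = (a * MonoidAlgebra.single (h : G) (1 : ℂ)) ⊗ₜ[ℂ] n - a ⊗ₜ[ℂ] hAct φ h n}

/-- The induced module `ℂG ⊗_{ℂH} (A·e_H)`. -/
noncomputable abbrev Ind :=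
  (MonoidAlgebra ℂ G ⊗[ℂ] AeH (G := G) φ) ⧸ indRel (G := G) φ

/-- `Fun_H(G, A·e_H)`: the `H`-equivariant functions `G → A` all of whose values lie
in `A·e_H`, as a `ℂ`-submodule of `G → A`. -/
noncomputable def FunHe : Submodule ℂ (G → A) where
  carrier := {f | (∀ (h : H) (g : G), f (↑h * g) = (φ h : A) * f g) ∧
    ∀ g : G, ∃ a : A, f g = a * eH φ}
  add_mem' := by
    rintro f₁ f₂ ⟨he₁, hv₁⟩ ⟨he₂, hv₂⟩
    refine ⟨fun h x => by simp [he₁ h x, he₂ h x, mul_add], fun g => ?_⟩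
    obtain ⟨a, ha⟩ := hv₁ g; obtain ⟨b, hb⟩ := hv₂ g
    exact ⟨a + b, by simp [ha, hb, add_mul]⟩
  zero_mem' := ⟨fun h x => by simp, fun g => ⟨0, by simp⟩⟩
  smul_mem' := by
    rintro c f ⟨he, hv⟩
    refine ⟨fun h x => by simp [he h x, mul_smul_comm], fun g => ?_⟩
    obtain ⟨a, ha⟩ := hv g
    exact ⟨c • a, by simp [ha, smul_mul_assoc]⟩

/-- The left `ℂG`-action on `Fun_H(G, A·e_H)`: `(g · f)(w) = f(wg)`. -/
noncomputable def gAct (g : G) (f : FunHe (G := G) φ) : FunHe (G := G) φ :=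
  ⟨fun w => f.1 (w * g),
    ⟨fun h x => by simpa only [mul_assoc] using f.2.1 h (x * g), fun w => f.2.2 (w * g)⟩⟩


/-- The set of functions in `Fun_H(G,A)` all of whose values lie in `A·e_H`. -/
def FunHeSet : Set (FunH (G := G) φ) :=
  {f | ∀ g : G, ∃ a : A, (f : G → A) g = a * eH φ}


noncomputable def average {X M : Type*} [Fintype X] [AddCommGroup M] [Module ℂ M]
    (f : X → M) : M :=
  (Fintype.card X : ℂ)⁻¹ • ∑ x, f x

theorem average_const {X M : Type*} [Fintype X] [Nonempty X] [AddCommGroup M] [Module ℂ M]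
    (m : M) : average (fun _ : X => m) = m := by
  rw [average, Finset.sum_const, Finset.card_univ, ← Nat.cast_smul_eq_nsmul ℂ, smul_smul,
    inv_mul_cancel₀ (Nat.cast_ne_zero.mpr Fintype.card_ne_zero), one_smul]

omit [Fintype G] in
theorem eH_mul_of_forall_phi_mul {v : A} (hv : ∀ h : H, (φ h : A) * v = v) :
    eH φ * v = v := by
  rw [eH, smul_mul_assoc, Finset.sum_mul]
  simp only [hv]
  exact average_const v

theorem eH_mul_eH : eH φ * eH φ = eH φ :=
  eH_mul_of_forall_phi_mul φ (phi_mul_eH φ)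

theorem mul_eH_of_mem {x : A} (hx : x ∈ AeH φ) : x * eH φ = x := by
  obtain ⟨a, rfl⟩ := hx
  rw [mul_assoc, eH_mul_eH]

omit [Fintype H] in
theorem coe_iotaEG_apply (f : FunH (G := G) φ) (g : G) :
    (iotaEG φ f : G → A) g = average (f : G → A) := by
  simp only [iotaEG, average, LinearMap.smul_apply, LinearMap.sum_apply,
    Submodule.coe_smul_of_tower, AddSubmonoidClass.coe_finsetSum, Pi.smul_apply,
    Finset.sum_apply]
  exact congrArg _ (Equiv.sum_comp (Equiv.mulLeft g) (f : G → A))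

omit [Fintype H] in
theorem phi_mul_average (f : FunH (G := G) φ) (h : H) :
    (φ h : A) * average (f : G → A) = average (f : G → A) := by
  rw [average, mul_smul_comm, Finset.mul_sum]
  simp_rw [← f.2 h]
  exact congrArg _ (Equiv.sum_comp (Equiv.mulLeft (h : G)) (f : G → A))

omit [Fintype G] [Fintype H] [Algebra ℂ A] in
theorem coe_op_smul_apply (a : A) (f : FunH (G := G) φ) (g : G) :
    ((MulOpposite.op a • f : FunH (G := G) φ) : G → A) g = (f : G → A) g * a := rfl

theorem op_eH_smul_delta : MulOpposite.op (eH φ) • delta φ = delta (G := G) φ :=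
  Subtype.ext <| funext fun _ => eH_mul_eH φ

theorem iotaEG_apply (f : FunH (G := G) φ) :
    iotaEG φ f = MulOpposite.op (average (f : G → A)) • delta φ :=
  Subtype.ext <| funext fun g => by
    rw [coe_iotaEG_apply, coe_op_smul_apply]
    exact (eH_mul_of_forall_phi_mul φ (phi_mul_average φ f)).symm

theorem iotaEG_delta : iotaEG φ (delta φ) = delta (G := G) φ := by
  rw [iotaEG_apply, show average (delta φ : G → A) = eH φ from average_const _,
    op_eH_smul_delta]

theorem apply_delta_mem_funHeSet (N : Module.End Aᵐᵒᵖ (FunH (G := G) φ)) :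
    N (delta φ) ∈ FunHeSet φ := fun g =>
  ⟨(N (delta φ) : G → A) g, by
    conv_lhs => rw [← op_eH_smul_delta, map_smul]
    rfl⟩

theorem mul_iotaEG_apply (M : Module.End Aᵐᵒᵖ (FunH (G := G) φ)) (f : FunH (G := G) φ) :
    (M * iotaEG φ) f = MulOpposite.op (average (f : G → A)) • (M * iotaEG φ) (delta φ) := by
  rw [Module.End.mul_apply, Module.End.mul_apply, iotaEG_delta, iotaEG_apply, map_smul]

theorem inv_card_smul_eta_apply_delta {f : FunH (G := G) φ} (hf : f ∈ FunHeSet φ) :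
    ((Fintype.card G : ℂ)⁻¹ • eta φ f) (delta φ) = f :=
  Subtype.ext <| funext fun w => by
    change (Fintype.card G : ℂ)⁻¹ • ((f : G → A) w * ∑ _g : G, eH φ) = (f : G → A) w
    rw [← mul_smul_comm, ← average, average_const, mul_eH_of_mem φ (hf w)]

theorem bijOn_apply_delta :
    Set.BijOn (fun N : Module.End Aᵐᵒᵖ (FunH (G := G) φ) => N (delta φ))
      {N | ∃ M, N = M * iotaEG φ} (FunHeSet φ) := by
  refine ⟨fun N _ => apply_delta_mem_funHeSet φ N, ?_, fun f hf => ?_⟩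
  · rintro _ ⟨M₁, rfl⟩ _ ⟨M₂, rfl⟩ hδ
    exact LinearMap.ext fun f => by
      rw [mul_iotaEG_apply, mul_iotaEG_apply φ M₂]
      exact congrArg _ hδ
  · refine ⟨((Fintype.card G : ℂ)⁻¹ • eta φ f) * iotaEG φ, ⟨_, rfl⟩, ?_⟩
    change (_ * iotaEG φ) (delta φ) = f
    rw [Module.End.mul_apply, iotaEG_delta, inv_card_smul_eta_apply_delta φ hf]

def indFun (a : MonoidAlgebra ℂ G) (n : A) (w : G) : A :=
  ∑ h : H, a.coeff (w⁻¹ * h) • ((φ h : A) * n)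

omit [Fintype G] in
theorem indFun_mul_left (a : MonoidAlgebra ℂ G) (n : A) (h₀ : H) (x : G) :
    indFun φ a n (h₀ * x) = (φ h₀ : A) * indFun φ a n x := by
  simp only [indFun, Finset.mul_sum, mul_smul_comm, ← mul_assoc, ← Units.val_mul, ← map_mul]
  refine (Equiv.sum_comp (Equiv.mulLeft h₀) _).symm.trans ?_
  simp [mul_assoc]

omit [Fintype G] in
theorem indFun_mem (a : MonoidAlgebra ℂ G) {n : A} (hn : n ∈ AeH φ) (w : G) :
    indFun φ a n w ∈ AeH φ :=
  Submodule.sum_mem _ fun h _ => Submodule.smul_mem _ _ (hAct φ h ⟨n, hn⟩).2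

noncomputable def indToFunHe : MonoidAlgebra ℂ G ⊗[ℂ] AeH φ →ₗ[ℂ] FunHe φ :=
  TensorProduct.lift <| LinearMap.mk₂ ℂ
    (fun a n => ⟨indFun φ a n, indFun_mul_left φ a n, indFun_mem φ a n.2⟩)
    (fun a₁ a₂ n => Subtype.ext <| funext fun w => by
      simp [indFun, add_smul, Finset.sum_add_distrib])
    (fun c a n => Subtype.ext <| funext fun w => by
      simp [indFun, smul_smul, Finset.smul_sum])
    (fun a n₁ n₂ => Subtype.ext <| funext fun w => by
      simp [indFun, mul_add, Finset.sum_add_distrib])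
    (fun c a n => Subtype.ext <| funext fun w => by
      simp [indFun, Finset.smul_sum, smul_comm c])

omit [Fintype G] in
theorem coe_indToFunHe_tmul (a : MonoidAlgebra ℂ G) (n : AeH φ) :
    (indToFunHe φ (a ⊗ₜ n) : G → A) = indFun φ a n := rfl

omit [Fintype G] in
theorem indToFunHe_mul_single_tmul (a : MonoidAlgebra ℂ G) (h₀ : H) (n : AeH φ) :
    indToFunHe φ ((a * MonoidAlgebra.single (h₀ : G) (1 : ℂ)) ⊗ₜ n) =
      indToFunHe φ (a ⊗ₜ hAct φ h₀ n) := by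
  refine Subtype.ext <| funext fun w => ?_
  simp only [coe_indToFunHe_tmul, indFun, MonoidAlgebra.coeff_mul_single_apply, mul_one]
  refine (Equiv.sum_comp (Equiv.mulRight h₀) _).symm.trans ?_
  simp [hAct, mul_assoc]

omit [Fintype G] in
theorem indRel_le_ker_indToFunHe : indRel φ ≤ LinearMap.ker (indToFunHe φ) := by
  rw [indRel, Submodule.span_le]
  rintro _ ⟨a, h, n, rfl⟩
  simp [indToFunHe_mul_single_tmul]

omit [Fintype G] in
theorem indToFunHe_single_mul_tmul (g : G) (a : MonoidAlgebra ℂ G) (n : AeH φ) :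
    indToFunHe φ ((MonoidAlgebra.single g (1 : ℂ) * a) ⊗ₜ n) =
      gAct φ g (indToFunHe φ (a ⊗ₜ n)) :=
  Subtype.ext <| funext fun w => by
    simp [gAct, coe_indToFunHe_tmul, indFun, mul_assoc]

omit [Fintype G] in
theorem coe_indToFunHe_tmul_zAct (z : A) (hz : z ∈ Set.center A) (a : MonoidAlgebra ℂ G)
    (n : AeH φ) :
    (indToFunHe φ (a ⊗ₜ zAct φ z hz n) : G → A) =
      fun w => (indToFunHe φ (a ⊗ₜ n) : G → A) w * z :=
  funext fun w => by
    simp [coe_indToFunHe_tmul, indFun, zAct, Finset.sum_mul, mul_assoc]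

noncomputable def evalAeH (g : G) : FunHe φ →ₗ[ℂ] AeH φ :=
  LinearMap.codRestrict _ ((LinearMap.proj g).comp (FunHe φ).subtype) fun f => f.2.2 g

omit [Fintype G] in
theorem coe_evalAeH_apply (g : G) (f : FunHe φ) : (evalAeH φ g f : A) = (f : G → A) g := rfl

noncomputable def funHeToInd : FunHe φ →ₗ[ℂ] MonoidAlgebra ℂ G ⊗[ℂ] AeH φ :=
  (Fintype.card H : ℂ)⁻¹ •
    ∑ g : G, (TensorProduct.mk ℂ _ _ (MonoidAlgebra.single g⁻¹ (1 : ℂ))).comp (evalAeH φ g)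

theorem funHeToInd_apply (f : FunHe φ) :
    funHeToInd φ f = (Fintype.card H : ℂ)⁻¹ •
      ∑ g : G, MonoidAlgebra.single g⁻¹ (1 : ℂ) ⊗ₜ evalAeH φ g f := by
  simp [funHeToInd]

theorem indToFunHe_funHeToInd (f : FunHe φ) : indToFunHe φ (funHeToInd φ f) = f := by
  classical
  refine Subtype.ext <| funext fun w => ?_
  have hterm : ∀ h : H, ∑ g : G, (MonoidAlgebra.single g⁻¹ (1 : ℂ)).coeff (w⁻¹ * h) •
      ((φ h : A) * (f : G → A) g) = (f : G → A) w := fun h => by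
    simp only [MonoidAlgebra.coeff_single, Finsupp.single_apply, inv_eq_iff_eq_inv, mul_inv_rev,
      inv_inv, ite_smul, one_smul, zero_smul, Finset.sum_ite_eq', Finset.mem_univ, if_true]
    rw [← f.2.1 h, mul_inv_cancel_left]
  simp only [funHeToInd_apply, map_smul, map_sum, Submodule.coe_smul_of_tower,
    AddSubmonoidClass.coe_finsetSum, Pi.smul_apply, Finset.sum_apply, coe_indToFunHe_tmul,
    indFun, coe_evalAeH_apply]
  rw [Finset.sum_comm]
  simp_rw [hterm]
  exact average_const _

omit [Fintype G] in
theorem evalAeH_indToFunHe_tmul (w : G) (a : MonoidAlgebra ℂ G) (n : AeH φ) :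
    evalAeH φ w (indToFunHe φ (a ⊗ₜ n)) = ∑ h : H, a.coeff (w⁻¹ * h) • hAct φ h n :=
  Subtype.ext <| by simp [coe_evalAeH_apply, coe_indToFunHe_tmul, indFun, hAct]

omit [Fintype G] in
theorem mkQ_single_tmul_hAct (w : G) (h : H) (n : AeH φ) :
    (indRel φ).mkQ (MonoidAlgebra.single w (1 : ℂ) ⊗ₜ hAct φ h n) =
      (indRel φ).mkQ (MonoidAlgebra.single (w * h) (1 : ℂ) ⊗ₜ n) := by
  have hrel : (MonoidAlgebra.single w (1 : ℂ) * MonoidAlgebra.single (h : G) 1) ⊗ₜ n -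
      MonoidAlgebra.single w 1 ⊗ₜ hAct φ h n ∈ indRel φ :=
    Submodule.subset_span ⟨_, h, n, rfl⟩
  rw [MonoidAlgebra.single_mul_single, one_mul] at hrel
  exact ((Submodule.Quotient.eq _).mpr hrel).symm

theorem mkQ_funHeToInd_indToFunHe :
    (indRel φ).mkQ ∘ₗ funHeToInd φ ∘ₗ indToFunHe φ = (indRel φ).mkQ := by
  classical
  ext g n
  change (indRel φ).mkQ (funHeToInd φ (indToFunHe φ (MonoidAlgebra.single g 1 ⊗ₜ n))) =
    (indRel φ).mkQ (MonoidAlgebra.single g 1 ⊗ₜ n)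
  have hterm : ∀ h : H, ∑ w : G, (MonoidAlgebra.single g (1 : ℂ)).coeff (w⁻¹ * h) •
      (indRel φ).mkQ (MonoidAlgebra.single (w⁻¹ * h) (1 : ℂ) ⊗ₜ n) =
      (indRel φ).mkQ (MonoidAlgebra.single g 1 ⊗ₜ n) := fun h => by
    refine (Equiv.sum_comp ((Equiv.inv G).trans (Equiv.mulRight (h : G)))
      fun u => (MonoidAlgebra.single g (1 : ℂ)).coeff u •
        (indRel φ).mkQ (MonoidAlgebra.single u (1 : ℂ) ⊗ₜ n)).trans ?_
    simp [MonoidAlgebra.coeff_single, Finsupp.single_apply]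
  simp only [funHeToInd_apply, evalAeH_indToFunHe_tmul, TensorProduct.tmul_sum,
    TensorProduct.tmul_smul, map_smul, map_sum, mkQ_single_tmul_hAct]
  rw [Finset.sum_comm]
  simp_rw [hterm]
  exact average_const _

noncomputable def indIso : Ind φ ≃ₗ[ℂ] FunHe φ :=
  LinearEquiv.ofLinearMap ((indRel φ).liftQ (indToFunHe φ) (indRel_le_ker_indToFunHe φ))
    ((indRel φ).mkQ ∘ₗ funHeToInd φ)
    (LinearMap.ext fun f => indToFunHe_funHeToInd φ f)
    (Submodule.linearMap_qext _ (mkQ_funHeToInd_indToFunHe φ))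

/-- There are isomorphisms of `(ℂG, Z(A))`-bimodules
`C(G,H,A)·ι(e_G) ≅ Fun_H(G, A·e_H) ≅ ℂG ⊗_{ℂH} (A·e_H)`: the map `ζ : N ↦ N(δ)` is a
`ℂG`- and `Z(A)`-equivariant bijection from the left ideal `C(G,H,A)·ι(e_G)` onto
`Fun_H(G, A·e_H)`, and there is a `ℂG`- and `Z(A)`-equivariant linear isomorphism
`ℂG ⊗_{ℂH} (A·e_H) ≅ Fun_H(G, A·e_H)`. -/
theorem statement4 :
    (Set.BijOn (fun N : Module.End Aᵐᵒᵖ (FunH (G := G) φ) => N (delta φ))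
      {N | ∃ M, N = M * iotaEG φ} (FunHeSet φ) ∧
    (∀ (g : G) (N : Module.End Aᵐᵒᵖ (FunH (G := G) φ)),
      (iota φ g * N) (delta φ) = iota φ g (N (delta φ))) ∧
    (∀ (z : A) (hz : z ∈ Set.center A) (N : Module.End Aᵐᵒᵖ (FunH (G := G) φ)),
      (rmul φ z hz * N) (delta φ) = MulOpposite.op z • (N (delta φ)))) ∧
    (∃ e : Ind (G := G) φ ≃ₗ[ℂ] FunHe (G := G) φ,
      (∀ (g : G) (a : MonoidAlgebra ℂ G) (n : AeH (G := G) φ),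
        e ((indRel φ).mkQ ((MonoidAlgebra.single g (1 : ℂ) * a) ⊗ₜ[ℂ] n)) =
          gAct φ g (e ((indRel φ).mkQ (a ⊗ₜ[ℂ] n)))) ∧
      (∀ (z : A) (hz : z ∈ Set.center A) (a : MonoidAlgebra ℂ G) (n : AeH (G := G) φ),
        (e ((indRel φ).mkQ (a ⊗ₜ[ℂ] zAct φ z hz n)) : G → A) =
          fun w => (e ((indRel φ).mkQ (a ⊗ₜ[ℂ] n)) : G → A) w * z)) :=
  ⟨⟨bijOn_apply_delta φ, fun _ _ => rfl, fun _ _ _ => rfl⟩,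
    indIso φ, indToFunHe_single_mul_tmul φ, coe_indToFunHe_tmul_zAct φ⟩

end Induction
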